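/- arXiv:2504.01927 — 2 statements merged into one kernel-verified Lean document; each statement's English description precedes it below -/
import Mathlib

section
/- Let F be a non-degenerate cdf on ℝ with finite first absolute moment, c > 0 and δ ∈ ℝ \ {0}. Then F(S) = 1 if and only if H(x) = 0 for all x ∈ T; moreover, either of these conditions implies that G(x+δ) − G(y+δ) = c·∫_x^y G(t) dt for all x, y ∈ T. -/
open MeasureTheory Set
open scoped ENNReal NNReal
open Filter Topology
set_option linter.unusedSectionVars false

/-- Survival function `G(x) = 1 - F(x) = μ(x, ∞)` of the distribution `μ`. -/
noncomputable def survG (μ : Measure ℝ) (x : ℝ) : ℝ := (μ (Set.Ioi x)).toReal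

/-- `H(x) = G(x+δ) - c ∫_x^∞ G(t) dt`. -/
noncomputable def funH (μ : Measure ℝ) (c δ x : ℝ) : ℝ :=
  survG μ (x + δ) - c * ∫ t in Set.Ioi x, survG μ t

/-- The support of the distribution: points every neighbourhood of which has positive mass. -/
def suppF (μ : Measure ℝ) : Set ℝ :=
  {x | ∀ ε > 0, 0 < μ (Set.Ioo (x - ε) (x + ε))}

/-- The set `R` of continuity points `x` of `F` in the support such that `x + δ` is an atom. -/
def Rset (μ : Measure ℝ) (δ : ℝ) : Set ℝ :=
  {x ∈ suppF μ | μ {x} = 0 ∧ 0 < μ {x + δ}}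

/-- `T = supp(F) \ R`. -/
def Tset (μ : Measure ℝ) (δ : ℝ) : Set ℝ := suppF μ \ Rset μ δ

variable (μ : Measure ℝ) [IsProbabilityMeasure μ]

lemma survG_nonneg (x : ℝ) : 0 ≤ survG μ x := ENNReal.toReal_nonneg

lemma survG_le_one (x : ℝ) : survG μ x ≤ 1 := by
  have := prob_le_one (μ := μ) (s := Set.Ioi x)
  simpa [survG] using ENNReal.toReal_le_of_le_ofReal zero_le_one (by simpa using this)

lemma survG_anti : Antitone (survG μ) := fun x y hxy => by
  exact ENNReal.toReal_mono (measure_ne_top μ _) (measure_mono (Set.Ioi_subset_Ioi hxy))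

lemma survG_measurable : Measurable (survG μ) := (survG_anti μ).measurable

lemma lintegral_survG_tail (a : ℝ) :
    ∫⁻ t in Ioi a, μ (Ioi t) = ∫⁻ x, ENNReal.ofReal (max (x - a) 0) ∂μ := by
  have hf : AEMeasurable (fun x : ℝ => max (x - a) 0) μ :=
    ((measurable_id.sub_const a).max measurable_const).aemeasurable
  have key := lintegral_eq_lintegral_meas_lt μ (f := fun x : ℝ => max (x - a) 0)
    (ae_of_all _ fun x => le_max_right _ _) hf
  rw [key]
  have h1 : ∀ t ∈ Ioi (0:ℝ), μ {x : ℝ | t < max (x - a) 0} = μ (Ioi (a + t)) := by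
    intro t ht
    congr 1
    ext x
    simp only [mem_setOf_eq, mem_Ioi, lt_max_iff]
    constructor
    · rintro (h | h)
      · linarith
      · exact absurd ht (by simpa using h.le.not_gt)
    · intro h; left; linarith
  rw [setLIntegral_congr_fun measurableSet_Ioi h1]
  have hemb : MeasurableEmbedding (fun t : ℝ => a + t) :=
    (MeasurableEquiv.addLeft a).measurableEmbedding
  have hmp : MeasurePreserving (fun t : ℝ => a + t) volume volume :=
    measurePreserving_add_left volume a
  have := hmp.setLIntegral_comp_preimage_emb hemb (f := fun s => μ (Ioi s)) (s := Ioi a)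
  have hpre : (fun t : ℝ => a + t) ⁻¹' Ioi a = Ioi 0 := by
    ext t; simp [mem_Ioi]
  rw [← this, hpre]

lemma integrableOn_survG (hint : Integrable (fun x : ℝ => x) μ) (a : ℝ) :
    IntegrableOn (survG μ) (Ioi a) := by
  refine ⟨(survG_measurable μ).aestronglyMeasurable, ?_⟩
  rw [hasFiniteIntegral_iff_ofReal (ae_of_all _ (survG_nonneg μ))]
  have h1 : ∀ t : ℝ, ENNReal.ofReal (survG μ t) = μ (Ioi t) := by
    intro t
    exact ENNReal.ofReal_toReal (measure_ne_top μ _)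
  simp only [h1]
  rw [lintegral_survG_tail]
  have hb : ∀ x : ℝ, ENNReal.ofReal (max (x - a) 0) ≤ ‖x‖₊ + ENNReal.ofReal |a| := by
    intro x
    rw [← enorm_eq_nnnorm, Real.enorm_eq_ofReal_abs, ← ENNReal.ofReal_add (abs_nonneg _) (abs_nonneg _)]
    apply ENNReal.ofReal_le_ofReal
    rcases le_total (x - a) 0 with h | h
    · simp [max_eq_right h]; positivity
    · rw [max_eq_left h]
      calc x - a ≤ |x - a| := le_abs_self _
        _ ≤ |x| + |a| := abs_sub x a
  have step1 : ∫⁻ x, ENNReal.ofReal (max (x - a) 0) ∂μ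
      ≤ ∫⁻ x, ((‖x‖₊ : ℝ≥0∞) + ENNReal.ofReal |a|) ∂μ := lintegral_mono hb
  have step2 : ∫⁻ x, ((‖x‖₊ : ℝ≥0∞) + ENNReal.ofReal |a|) ∂μ
      = (∫⁻ x, (‖x‖₊ : ℝ≥0∞) ∂μ) + ENNReal.ofReal |a| := by
    rw [lintegral_add_right _ measurable_const, lintegral_const, measure_univ, mul_one]
  refine lt_of_le_of_lt (step1.trans step2.le) ?_
  exact ENNReal.add_lt_top.2 ⟨hint.hasFiniteIntegral, ENNReal.ofReal_lt_top⟩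

lemma integral_Ioi_diff (hint : Integrable (fun x : ℝ => x) μ) (x y : ℝ) :
    (∫ t in Ioi x, survG μ t) - ∫ t in Ioi y, survG μ t = ∫ t in x..y, survG μ t := by
  have key : ∀ u v : ℝ, u ≤ v →
      (∫ t in Ioi u, survG μ t) = (∫ t in Ioc u v, survG μ t) + ∫ t in Ioi v, survG μ t := by
    intro u v huv
    rw [← setIntegral_union (Set.Ioc_disjoint_Ioi le_rfl) measurableSet_Ioi
      ((integrableOn_survG μ hint u).mono_set Set.Ioc_subset_Ioi_self)
      (integrableOn_survG μ hint v), Set.Ioc_union_Ioi_eq_Ioi huv]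
  rcases le_total x y with h | h
  · rw [key x y h, intervalIntegral.integral_of_le h]; ring
  · rw [key y x h, intervalIntegral.integral_of_ge h]; ring

lemma continuous_tailI (hint : Integrable (fun x : ℝ => x) μ) :
    Continuous (fun x : ℝ => ∫ t in Ioi x, survG μ t) := by
  refine (LipschitzWith.of_dist_le_mul (K := 1) fun x y => ?_).continuous
  rw [Real.dist_eq, Real.dist_eq, integral_Ioi_diff μ hint x y]
  have := intervalIntegral.norm_integral_le_of_norm_le_const (C := 1) (a := x) (b := y)
    (f := survG μ) (fun t _ => by
      rw [Real.norm_eq_abs, abs_of_nonneg (survG_nonneg μ t)]; exact survG_le_one μ t)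
  simpa [abs_sub_comm y x] using this

lemma survG_sub (u v : ℝ) (h : u ≤ v) :
    survG μ u - survG μ v = (μ (Ioc u v)).toReal := by
  rw [survG, survG, ← Set.Ioc_union_Ioi_eq_Ioi h,
    measure_union (Set.Ioc_disjoint_Ioi le_rfl) measurableSet_Ioi,
    ENNReal.toReal_add (measure_ne_top μ _) (measure_ne_top μ _)]
  ring

lemma continuousAt_survG {a : ℝ} (ha : μ {a} = 0) : ContinuousAt (survG μ) a := by
  rw [Metric.continuousAt_iff]
  intro ε hε
  have hdiv : ∀ {m n : ℕ}, m ≤ n → (1:ℝ)/(n+1) ≤ 1/(m+1) := by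
    intro m n h
    have h1 : (m:ℝ)+1 ≤ n+1 := by exact_mod_cast Nat.succ_le_succ h
    exact one_div_le_one_div_of_le (by positivity) h1
  obtain ⟨η, hη, hsmall⟩ : ∃ η > 0, (μ (Ioc (a - η) (a + η))).toReal < ε := by
    have hseq : Tendsto (fun n : ℕ => μ (Ioc (a - 1 / (n + 1)) (a + 1 / (n + 1)))) atTop
        (nhds (μ (⋂ n : ℕ, Ioc (a - 1 / (n + 1)) (a + 1 / (n + 1))))) := by
      refine tendsto_measure_iInter_atTop (fun n => measurableSet_Ioc.nullMeasurableSet)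
        (fun m n hmn => Set.Ioc_subset_Ioc (by linarith [hdiv hmn]) (by linarith [hdiv hmn]))
        ⟨0, measure_ne_top μ _⟩
    have hiInter : (⋂ n : ℕ, Ioc (a - 1 / ((n:ℝ) + 1)) (a + 1 / ((n:ℝ) + 1))) = {a} := by
      ext x
      simp only [mem_iInter, mem_Ioc, mem_singleton_iff]
      constructor
      · intro h
        have hxa : x ≤ a := by
          refine le_of_forall_pos_le_add fun ε hε => ?_
          obtain ⟨n, hn⟩ := exists_nat_one_div_lt hε
          exact (h n).2.trans (by linarith [hn])
        have hax : a ≤ x := by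
          refine le_of_forall_pos_le_add fun ε hε => ?_
          obtain ⟨n, hn⟩ := exists_nat_one_div_lt hε
          linarith [(h n).1, hn]
        exact le_antisymm hxa hax
      · rintro rfl
        intro n
        have : (0:ℝ) < 1 / ((n:ℝ)+1) := by positivity
        constructor <;> linarith
    rw [hiInter, ha] at hseq
    have htr : Tendsto (fun n : ℕ => (μ (Ioc (a - 1 / (n + 1)) (a + 1 / (n + 1)))).toReal)
        atTop (nhds 0) := by
      have := (ENNReal.tendsto_toReal (by simp : (0:ENNReal) ≠ ⊤)).comp hseq
      simpa [Function.comp_def] using this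
    obtain ⟨n, hn⟩ := (htr.eventually_lt_const hε).exists
    exact ⟨1 / (n + 1), by positivity, hn⟩
  refine ⟨η, hη, fun {u} hu => ?_⟩
  rw [Real.dist_eq] at hu
  obtain ⟨hu1, hu2⟩ := abs_lt.1 hu
  rw [Real.dist_eq]
  have hmono : ∀ p q : ℝ, a - η < p → q ≤ a + η →
      (μ (Ioc p q)).toReal ≤ (μ (Ioc (a - η) (a + η))).toReal :=
    fun p q h2 h3 => ENNReal.toReal_mono (measure_ne_top μ _)
      (measure_mono (Set.Ioc_subset_Ioc h2.le h3))
  rcases le_total u a with h | h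
  · have hsub := survG_sub μ u a h
    have h0 : 0 ≤ survG μ u - survG μ a := by rw [hsub]; positivity
    rw [abs_of_nonneg h0, hsub]
    exact lt_of_le_of_lt (hmono u a (by linarith) (by linarith)) hsmall
  · have hsub := survG_sub μ a u h
    rw [abs_sub_comm, abs_of_nonneg (by rw [hsub]; positivity), hsub]
    exact lt_of_le_of_lt (hmono a u (by linarith) (by linarith)) hsmall

lemma measure_suppF_compl : μ (suppF μ)ᶜ = 0 := by
  set U : Set (ℚ × ℚ) := {pq | μ (Ioo (pq.1 : ℝ) (pq.2 : ℝ)) = 0} with hU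
  have hcover : (suppF μ)ᶜ ⊆ ⋃ pq ∈ U, Ioo (pq.1 : ℝ) (pq.2 : ℝ) := by
    intro x hx
    simp only [suppF, mem_compl_iff, mem_setOf_eq, not_forall] at hx
    obtain ⟨ε, hε, h0⟩ := hx
    have hμ0 : μ (Ioo (x - ε) (x + ε)) = 0 := by
      by_contra h
      exact h0 (pos_iff_ne_zero.2 h)
    obtain ⟨p, hp1, hp2⟩ := exists_rat_btwn (show x - ε < x by linarith)
    obtain ⟨q, hq1, hq2⟩ := exists_rat_btwn (show x < x + ε by linarith)
    have hpq : ((p, q) : ℚ × ℚ) ∈ U := by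
      simp only [hU, mem_setOf_eq]
      exact measure_mono_null (Set.Ioo_subset_Ioo hp1.le hq2.le) hμ0
    exact mem_biUnion hpq ⟨hp2, hq1⟩
  refine measure_mono_null hcover ?_
  exact (measure_biUnion_null_iff (Set.to_countable U)).2 fun pq hpq => hpq

lemma Rset_countable (δ : ℝ) : (Rset μ δ).Countable := by
  have hA : Set.Countable {t : ℝ | 0 < μ {t}} := by
    have h := Measure.countable_meas_level_set_pos (μ := μ) (g := fun x : ℝ => x)
      measurable_id
    have hset : ∀ t : ℝ, {a : ℝ | (fun x : ℝ => x) a = t} = {t} := by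
      intro t; ext x; simp
    simpa [hset] using h
  have hsub : Rset μ δ ⊆ (fun x : ℝ => x + δ) ⁻¹' {t : ℝ | 0 < μ {t}} :=
    fun x hx => hx.2.2
  exact (hA.preimage (add_left_injective δ)).mono hsub

lemma measure_Rset (δ : ℝ) : μ (Rset μ δ) = 0 := by
  rw [← Set.biUnion_of_singleton (Rset μ δ)]
  exact (measure_biUnion_null_iff (Rset_countable μ δ)).2 fun x hx => hx.2.1

lemma measure_Tset_compl (δ : ℝ) : μ (Tset μ δ)ᶜ = 0 := by
  have : (Tset μ δ)ᶜ ⊆ (suppF μ)ᶜ ∪ Rset μ δ := by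
    intro x hx
    simp only [Tset, mem_compl_iff, mem_diff, not_and, not_not] at hx
    by_cases h : x ∈ suppF μ
    · exact Or.inr (hx h)
    · exact Or.inl h
  exact measure_mono_null this
    (measure_union_null (measure_suppF_compl μ) (measure_Rset μ δ))

/-- `F(S) = 1` iff `H ≡ 0` on `T`; moreover either condition implies
`G(x+δ) - G(y+δ) = c ∫_x^y G(t) dt` for all `x, y ∈ T`. -/
theorem stmt1 (μ : Measure ℝ) [IsProbabilityMeasure μ]
    (hnd : ∀ x : ℝ, μ {x} ≠ 1)
    (hint : Integrable (fun x : ℝ => x) μ)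
    (c δ : ℝ) (hc : 0 < c) (hδ : δ ≠ 0) :
    (μ {x | funH μ c δ x = 0} = 1 ↔ ∀ x ∈ Tset μ δ, funH μ c δ x = 0) ∧
    (μ {x | funH μ c δ x = 0} = 1 →
      ∀ x ∈ Tset μ δ, ∀ y ∈ Tset μ δ,
        survG μ (x + δ) - survG μ (y + δ) = c * ∫ t in x..y, survG μ t) := by
  set S : Set ℝ := {x | funH μ c δ x = 0} with hSdef
  have hforward : μ S = 1 → ∀ x ∈ Tset μ δ, funH μ c δ x = 0 := by
    intro h1 x hx
    obtain ⟨hxsupp, hxR⟩ := hx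
    by_cases hatom : μ {x} = 0
    · have hxδ : μ {x + δ} = 0 := by
        by_contra h
        exact hxR ⟨hxsupp, hatom, pos_iff_ne_zero.2 h⟩
      have hcont : ContinuousAt (funH μ c δ) x := by
        have h1c : ContinuousAt (fun y : ℝ => survG μ (y + δ)) x :=
          ContinuousAt.comp (f := fun y : ℝ => y + δ) (continuousAt_survG μ hxδ)
            (continuous_add_right δ).continuousAt
        have h2c : ContinuousAt (fun y : ℝ => ∫ t in Ioi y, survG μ t) x :=
          (continuous_tailI μ hint).continuousAt
        exact h1c.sub (h2c.const_mul c)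
      have hclos : x ∈ closure S := by
        rw [mem_closure_iff]
        intro U hUopen hxU
        obtain ⟨ε, hε, hball⟩ := Metric.isOpen_iff.1 hUopen x hxU
        by_contra hne
        push_neg at hne
        have hsub : S ⊆ (Ioo (x - ε) (x + ε))ᶜ := by
          intro s hs hmem
          refine eq_empty_iff_forall_notMem.1 hne s ⟨hball ?_, hs⟩
          rw [Real.ball_eq_Ioo]
          exact hmem
        have hle : μ S ≤ μ (Ioo (x - ε) (x + ε))ᶜ := measure_mono hsub
        rw [measure_compl measurableSet_Ioo (measure_ne_top μ _), measure_univ, h1] at hle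
        have hlt : (1 : ENNReal) - μ (Ioo (x - ε) (x + ε)) < 1 :=
          ENNReal.sub_lt_self (by simp) one_ne_zero (pos_iff_ne_zero.1 (hxsupp ε hε))
        exact absurd hle (not_le.2 hlt)
      have hne : (nhdsWithin x S).NeBot := mem_closure_iff_nhdsWithin_neBot.1 hclos
      have t1 : Tendsto (funH μ c δ) (nhdsWithin x S) (nhds (funH μ c δ x)) :=
        hcont.continuousWithinAt
      have t2 : Tendsto (funH μ c δ) (nhdsWithin x S) (nhds 0) := by
        refine Tendsto.congr' ?_ tendsto_const_nhds
        filter_upwards [self_mem_nhdsWithin] with s hs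
        exact (hs : funH μ c δ s = 0).symm
      exact tendsto_nhds_unique t1 t2
    · by_contra hH
      have hsub : S ⊆ ({x} : Set ℝ)ᶜ := by
        intro s hs hmem
        rw [mem_singleton_iff] at hmem
        subst hmem
        exact hH hs
      have hle : μ S ≤ μ (({x} : Set ℝ)ᶜ) := measure_mono hsub
      rw [measure_compl (measurableSet_singleton x) (measure_ne_top μ _), measure_univ,
        h1] at hle
      have hlt : (1 : ENNReal) - μ {x} < 1 :=
        ENNReal.sub_lt_self (by simp) one_ne_zero hatom
      exact absurd hle (not_le.2 hlt)
  have hback : (∀ x ∈ Tset μ δ, funH μ c δ x = 0) → μ S = 1 := by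
    intro h
    have hsub : Sᶜ ⊆ (Tset μ δ)ᶜ := compl_subset_compl.2 fun x hx => h x hx
    have h0 : μ Sᶜ = 0 := measure_mono_null hsub (measure_Tset_compl μ δ)
    have hle : μ univ ≤ μ S + μ Sᶜ := by
      rw [← Set.union_compl_self S]
      exact measure_union_le _ _
    rw [h0, add_zero, measure_univ] at hle
    exact le_antisymm prob_le_one hle
  refine ⟨⟨hforward, hback⟩, ?_⟩
  intro h1 x hx y hy
  have hHx := hforward h1 x hx
  have hHy := hforward h1 y hy
  simp only [funH] at hHx hHy
  have hdiff := integral_Ioi_diff μ hint x y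
  rw [← hdiff]
  rw [mul_sub]
  linarith [hHx, hHy]
end

section
/- Let F be a non-degenerate cdf on ℝ with finite first absolute moment, c > 0 and δ > 0, and suppose F solves problem P_{c,δ} and ω_F < ∞. Then: (a) the open interval (ω_F − δ, ω_F) contains no point of supp(F); and (b) ω_F is an atom of F, i.e. F({ω_F}) > 0. -/
open MeasureTheory Set

lemma suppF_closed (μ : Measure ℝ) : IsClosed (suppF μ) := by
  rw [← isOpen_compl_iff, isOpen_iff_mem_nhds]
  intro x hx
  simp only [mem_compl_iff, suppF, mem_setOf_eq, not_forall] at hx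
  obtain ⟨ε, hε⟩ := hx
  push_neg at hε
  obtain ⟨hε0, hμle⟩ := hε
  have hμ0 : μ (Ioo (x - ε) (x + ε)) = 0 := le_antisymm hμle zero_le
  have : Ioo (x - ε) (x + ε) ∈ nhds x := Ioo_mem_nhds (by linarith) (by linarith)
  filter_upwards [this] with y hy
  simp only [mem_compl_iff, suppF, mem_setOf_eq, not_forall]
  refine ⟨min (y - (x - ε)) ((x + ε) - y), ?_⟩
  push_neg
  refine ⟨lt_min (by linarith [hy.1]) (by linarith [hy.2]), ?_⟩
  have hsub : Ioo (y - min (y - (x - ε)) ((x + ε) - y)) (y + min (y - (x - ε)) ((x + ε) - y))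
      ⊆ Ioo (x - ε) (x + ε) := by
    intro t ht
    constructor
    · have := ht.1; have := min_le_left (y - (x - ε)) ((x + ε) - y); linarith
    · have := ht.2; have := min_le_right (y - (x - ε)) ((x + ε) - y); linarith
  exact le_trans (measure_mono hsub) (le_of_eq hμ0)

lemma suppF_compl_null (μ : Measure ℝ) : μ (suppF μ)ᶜ = 0 := by
  apply measure_null_of_locally_null
  intro x hx
  simp only [mem_compl_iff, suppF, mem_setOf_eq, not_forall] at hx
  obtain ⟨ε, hε⟩ := hx
  push_neg at hε
  refine ⟨Ioo (x - ε) (x + ε), ?_, le_antisymm hε.2 zero_le⟩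
  exact mem_nhdsWithin_of_mem_nhds (Ioo_mem_nhds (by linarith [hε.1]) (by linarith [hε.1]))

lemma suppF_nonempty (μ : Measure ℝ) [IsProbabilityMeasure μ] : (suppF μ).Nonempty := by
  by_contra h
  rw [not_nonempty_iff_eq_empty] at h
  have := suppF_compl_null μ
  rw [h, compl_empty, measure_univ] at this
  exact one_ne_zero this

/-- For `δ > 0`, if `F` solves `P_{c,δ}` and `ω_F < ∞`, then (a) `(ω_F - δ, ω_F)` contains
no point of the support, and (b) `ω_F` is an atom of `F`. -/
theorem stmt7 (μ : Measure ℝ) [IsProbabilityMeasure μ]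
    (hnd : ∀ x : ℝ, μ {x} ≠ 1)
    (hint : Integrable (fun x : ℝ => x) μ)
    (c δ : ℝ) (hc : 0 < c) (hδ : 0 < δ)
    (hsol : ∀ x ∈ Tset μ δ, funH μ c δ x = 0)
    (homega : BddAbove (suppF μ)) :
    Set.Ioo (sSup (suppF μ) - δ) (sSup (suppF μ)) ∩ suppF μ = ∅ ∧
    0 < μ {sSup (suppF μ)} := by
  set ω := sSup (suppF μ) with hω
  have hωmem : ω ∈ suppF μ := (suppF_closed μ).csSup_mem (suppF_nonempty μ) homega
  have hle : ∀ y ∈ suppF μ, y ≤ ω := fun y hy => le_csSup homega hy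
  have hIoiω : μ (Ioi ω) = 0 := by
    apply measure_mono_null _ (suppF_compl_null μ)
    intro y hy hyS
    exact absurd (hle y hyS) (not_le.2 hy)
  have hGanti : Antitone (survG μ) := by
    intro s t hst
    exact ENNReal.toReal_mono (measure_ne_top μ _) (measure_mono (Ioi_subset_Ioi hst))
  have hGmeas : Measurable (survG μ) := hGanti.measurable
  have hGnn : ∀ t, 0 ≤ survG μ t := fun t => ENNReal.toReal_nonneg
  have hGzero : ∀ t, ω ≤ t → survG μ t = 0 := by
    intro t ht
    have : μ (Ioi t) = 0 := measure_mono_null (Ioi_subset_Ioi ht) hIoiω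
    simp [survG, this]
  -- Part (a)
  have parta : Set.Ioo (ω - δ) ω ∩ suppF μ = ∅ := by
    by_contra h
    obtain ⟨x, hxI, hxS⟩ := nonempty_iff_ne_empty.2 h
    have hxω : x < ω := hxI.2
    have hxδ : ω < x + δ := by linarith [hxI.1]
    have hxT : x ∈ Tset μ δ := by
      refine ⟨hxS, fun hR => ?_⟩
      have hδ0 : μ {x + δ} = 0 :=
        measure_mono_null (singleton_subset_iff.2 hxδ) hIoiω
      obtain ⟨-, -, hlt⟩ := hR
      rw [hδ0] at hlt
      exact lt_irrefl _ hlt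
    have hH := hsol x hxT
    have hGx : survG μ (x + δ) = 0 := hGzero _ hxδ.le
    rw [funH, hGx] at hH
    have hmul : c * ∫ t in Ioi x, survG μ t = 0 := by linarith
    have hint0 : ∫ t in Ioi x, survG μ t = 0 :=
      (mul_eq_zero.1 hmul).resolve_left (ne_of_gt hc)
    have hIocInt : IntegrableOn (survG μ) (Ioc x ω) := by
      have hb : IntegrableOn (fun _ : ℝ => (1 : ℝ)) (Ioc x ω) :=
        integrableOn_const measure_Ioc_lt_top.ne
      refine hb.mono' (hGmeas.aestronglyMeasurable.restrict)
        (Filter.Eventually.of_forall fun t => ?_)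
      rw [Real.norm_eq_abs, abs_of_nonneg (hGnn t)]
      calc survG μ t ≤ (μ univ).toReal :=
            ENNReal.toReal_mono (measure_ne_top μ _) (measure_mono (subset_univ _))
        _ = 1 := by simp
    have hIoiInt : IntegrableOn (survG μ) (Ioi x) := by
      rw [← Ioc_union_Ioi_eq_Ioi hxω.le]
      refine hIocInt.union ?_
      exact (integrableOn_congr_fun (fun t ht => (hGzero t (le_of_lt ht)).symm)
        measurableSet_Ioi).1 integrableOn_zero
    have hae : ∀ᵐ t ∂(volume.restrict (Ioi x)), survG μ t = 0 := by
      have h0 := (integral_eq_zero_iff_of_nonneg (fun t => hGnn t) hIoiInt).1 hint0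
      filter_upwards [h0] with t ht using ht
    set t0 := (x + ω) / 2 with ht0
    have hxt0 : x < t0 := by rw [ht0]; linarith
    have ht0ω : t0 < ω := by rw [ht0]; linarith
    have hGt0 : survG μ t0 = 0 := by
      by_contra hne
      have hpos : 0 < survG μ t0 := lt_of_le_of_ne (hGnn t0) (Ne.symm hne)
      have hsub : Ioo x t0 ⊆ {t | ¬ survG μ t = 0} ∩ Ioi x := by
        intro t ht
        refine ⟨?_, ht.1⟩
        have hmon : survG μ t0 ≤ survG μ t := hGanti ht.2.le
        simp only [mem_setOf_eq]
        intro h0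
        rw [h0] at hmon
        linarith
      have hnull : volume ({t | ¬ survG μ t = 0} ∩ Ioi x) = 0 := by
        have h1 := (ae_restrict_iff' measurableSet_Ioi).1 hae
        rw [Filter.Eventually, mem_ae_iff] at h1
        have heq : {t | t ∈ Ioi x → survG μ t = 0}ᶜ = {t | ¬ survG μ t = 0} ∩ Ioi x := by
          ext t; simp only [mem_compl_iff, mem_setOf_eq, mem_inter_iff, mem_Ioi]
          tauto
        rwa [heq] at h1
      have hvol : volume (Ioo x t0) = 0 := measure_mono_null hsub hnull
      rw [Real.volume_Ioo] at hvol
      rw [ENNReal.ofReal_eq_zero] at hvol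
      linarith
    have hμt0 : μ (Ioi t0) = 0 := by
      have h2 := hGt0
      rw [survG] at h2
      exact ((ENNReal.toReal_eq_zero_iff _).1 h2).resolve_right (measure_ne_top μ _)
    have hpos := hωmem (ω - t0) (by linarith)
    have hz : μ (Ioo (ω - (ω - t0)) (ω + (ω - t0))) = 0 := by
      apply measure_mono_null _ hμt0
      intro y hy
      have := hy.1
      simp only [mem_Ioi]
      linarith
    rw [hz] at hpos
    exact lt_irrefl _ hpos
  refine ⟨parta, ?_⟩
  -- Part (b)
  have hIoo0 : μ (Ioo (ω - δ) ω) = 0 := by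
    apply measure_mono_null _ (suppF_compl_null μ)
    intro y hy hyS
    have hmem : y ∈ Set.Ioo (ω - δ) ω ∩ suppF μ := ⟨hy, hyS⟩
    rw [parta] at hmem
    exact hmem
  by_contra hnot
  push_neg at hnot
  have hsing : μ {ω} = 0 := le_antisymm hnot zero_le
  have hcover : Ioi (ω - δ) ⊆ Ioo (ω - δ) ω ∪ ({ω} ∪ Ioi ω) := by
    intro y hy
    rcases lt_trichotomy y ω with h | h | h
    · exact Or.inl ⟨hy, h⟩
    · exact Or.inr (Or.inl (by simp [h]))
    · exact Or.inr (Or.inr h)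
  have hIoi0 : μ (Ioi (ω - δ)) = 0 :=
    measure_mono_null hcover (measure_union_null hIoo0 (measure_union_null hsing hIoiω))
  have hpos := hωmem δ hδ
  have hz : μ (Ioo (ω - δ) (ω + δ)) = 0 :=
    measure_mono_null (fun y hy => hy.1) hIoi0
  rw [hz] at hpos
  exact lt_irrefl _ hpos
end
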